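/- arXiv:1011.3400 — 2 statements merged into one kernel-verified Lean document; each statement's English description precedes it below -/
import Mathlib

section
/- In the general m-door game where the host randomly reveals a prize of value v_r, the conditional expected value of switching, Σ_i P(F_i | M_r) · (t - v_i - v_r)/(m - 2), equals (t - v_r)/(m - 1), hence equals the expected value of sticking. -/
/-!
Clearing the common denominator `(m - 1)(m - 2)`, the claim reduces to the identity
`∑ᵢ (nᵢ - [i = r]) (t - vᵢ - v_r) = (m - 2)(t - v_r)`, which holds in any commutative ring
because `∑ᵢ nᵢ = m` and `∑ᵢ nᵢ vᵢ = t`.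
-/

open Finset

theorem sum_sub_indicator_mul_switch_value {ι R : Type*} [Fintype ι] [DecidableEq ι]
    [CommRing R] (n v : ι → R) (r : ι) :
    ∑ i, (n i - if i = r then 1 else 0) * ((∑ j, n j * v j) - v i - v r) =
      ((∑ j, n j) - 2) * ((∑ j, n j * v j) - v r) := by
  simp only [sub_mul, mul_sub, sum_sub_distrib, ite_mul, one_mul, zero_mul,
    sum_ite_eq', mem_univ, if_true, ← sum_mul]
  ring

theorem general_switch_expectation_general {ι : Type*} [Fintype ι] [DecidableEq ι]
    (n : ι → ℕ) (v : ι → ℝ) (r : ι) (m : ℕ) (hm : m = ∑ i, n i) (hm3 : 3 ≤ m)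
    (t : ℝ) (ht : t = ∑ i, (n i : ℝ) * v i)
    (post : ι → ℝ)
    (hpost : ∀ i, post i =
      if i = r then ((n i : ℝ) - 1) / ((m : ℝ) - 1) else (n i : ℝ) / ((m : ℝ) - 1)) :
    ∑ i, post i * ((t - v i - v r) / ((m : ℝ) - 2)) = (t - v r) / ((m : ℝ) - 1) := by
  have hm2 : (m : ℝ) - 2 ≠ 0 := by
    have : (3 : ℝ) ≤ m := by exact_mod_cast hm3
    linarith
  have hpost_sub_indicator : ∀ i, post i = ((n i : ℝ) - if i = r then 1 else 0) / ((m : ℝ) - 1) := by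
    intro i
    rw [hpost]
    split_ifs <;> simp
  calc ∑ i, post i * ((t - v i - v r) / ((m : ℝ) - 2))
      = (∑ i, ((n i : ℝ) - if i = r then 1 else 0) * (t - v i - v r)) /
          (((m : ℝ) - 1) * ((m : ℝ) - 2)) := by
        rw [sum_div]
        refine sum_congr rfl fun i _ => ?_
        rw [hpost_sub_indicator, div_mul_div_comm]
    _ = (t - v r) * ((m : ℝ) - 2) / (((m : ℝ) - 1) * ((m : ℝ) - 2)) := by
        rw [ht, sum_sub_indicator_mul_switch_value, hm]
        push_cast
        ring
    _ = (t - v r) / ((m : ℝ) - 1) := mul_div_mul_right _ _ hm2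

/-- General m-door game (m ≥ 3): with posteriors P(F_i|M_r) as before and
conditional switch value (t - v i - v r)/(m-2) given F_i and M_r, the conditional
expected value of switching is Σ_i P(F_i|M_r)·(t - v i - v r)/(m-2) = (t - v r)/(m-1),
hence equals the expected value of sticking. -/
theorem general_switch_expectation {ι : Type*} [Fintype ι] [DecidableEq ι]
    (n : ι → ℕ) (v : ι → ℝ) (r : ι) (m : ℕ) (hm : m = ∑ i, n i) (hm3 : 3 ≤ m)
    (hr : 1 ≤ n r) (t : ℝ) (ht : t = ∑ i, (n i : ℝ) * v i)
    (post : ι → ℝ)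
    (hpost : ∀ i, post i =
      if i = r then ((n i : ℝ) - 1) / ((m : ℝ) - 1) else (n i : ℝ) / ((m : ℝ) - 1)) :
    ∑ i, post i * ((t - v i - v r) / ((m : ℝ) - 2)) = (t - v r) / ((m : ℝ) - 1) :=
  general_switch_expectation_general n v r m hm hm3 t ht post hpost
end

section
/- In Baumann's two-player Monty Hall game, each player wins the car with probability 3/7 by sticking and 4/7 by switching. -/
/-!
Summing out the host's uniform choice of door leaves weight 1/27 on every triple
(car, pick₁, pick₂) for which the host has a door to open, i.e. every triple that is not
pairwise distinct: 27 - 3! = 21 triples. A player's own door hides the car in 9 of them. In the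
other 12 the car is behind the door that player switches to, because the host never opens the
car's door.
-/

open Finset

/-- Doors the host may open: not the car's door and not chosen by either player. -/
def availDoors (c p1 p2 : Fin 3) : Finset (Fin 3) :=
  Finset.univ.filter (fun d => d ≠ c ∧ d ≠ p1 ∧ d ≠ p2)

/-- Weight of outcome (car, pick1, pick2, opened door): car and the two picks are
independent and uniform on the 3 doors, and the host opens a uniformly random
available door (weight 0 if the opened door is unavailable; if no door is
available the game never reaches the switching stage and all weights vanish). -/
def baumannWeight : Fin 3 × Fin 3 × Fin 3 × Fin 3 → ℚ :=
  fun ω =>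
    if ω.2.2.2 ∈ availDoors ω.1 ω.2.1 ω.2.2.1 then
      (1/27) * (1 / ((availDoors ω.1 ω.2.1 ω.2.2.1).card : ℚ))
    else 0

theorem sum_ite_mem_mul_one_div_card {α K : Type*} [Fintype α] [DecidableEq α] [Field K]
    [CharZero K] (s : Finset α) (a : K) :
    ∑ x, (if x ∈ s then a * (1 / (#s : K)) else 0) = if s.Nonempty then a else 0 := by
  rw [← sum_filter, filter_mem_eq_inter, univ_inter, sum_const, nsmul_eq_mul]
  split_ifs with hs
  · have : (#s : K) ≠ 0 := by exact_mod_cast hs.card_pos.ne'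
    field_simp
  · simp [not_nonempty_iff_eq_empty.mp hs]

theorem sum_baumannWeight_door (c p₁ p₂ : Fin 3) :
    ∑ d, baumannWeight (c, p₁, p₂, d) = if (availDoors c p₁ p₂).Nonempty then 1 / 27 else 0 :=
  sum_ite_mem_mul_one_div_card (availDoors c p₁ p₂) (1 / 27 : ℚ)

theorem sum_baumannWeight_filter (P : Fin 3 → Fin 3 → Fin 3 → Prop)
    [∀ c p₁ p₂, Decidable (P c p₁ p₂)] {n : ℕ}
    (hn : #{x : Fin 3 × Fin 3 × Fin 3 |
      P x.1 x.2.1 x.2.2 ∧ (availDoors x.1 x.2.1 x.2.2).Nonempty} = n) :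
    ∑ ω ∈ univ.filter (fun ω : Fin 3 × Fin 3 × Fin 3 × Fin 3 => P ω.1 ω.2.1 ω.2.2.1),
      baumannWeight ω = n / 27 := by
  rw [← hn, sum_filter, card_filter, Nat.cast_sum, sum_div]
  simp only [Fintype.sum_prod_type]
  refine sum_congr rfl fun c _ => sum_congr rfl fun p₁ _ => sum_congr rfl fun p₂ _ => ?_
  by_cases hP : P c p₁ p₂
  · simp only [hP, if_true, true_and, sum_baumannWeight_door]
    split_ifs <;> simp
  · simp [hP]

theorem baumannWeight_eq_zero_of_car_opened {ω : Fin 3 × Fin 3 × Fin 3 × Fin 3}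
    (h : ω.1 = ω.2.2.2) : baumannWeight ω = 0 := by
  simp [baumannWeight, availDoors, h]

theorem sum_baumannWeight_filter_and_car_ne_opened (P : Fin 3 × Fin 3 × Fin 3 × Fin 3 → Prop)
    [DecidablePred P] :
    ∑ ω ∈ univ.filter (fun ω => P ω ∧ ω.1 ≠ ω.2.2.2), baumannWeight ω =
      ∑ ω ∈ univ.filter P, baumannWeight ω := by
  rw [← filter_filter]
  exact sum_filter_of_ne fun ω _ hω h => hω (baumannWeight_eq_zero_of_car_opened h)

/-- Baumann's two-player game: conditional on reaching the switching stage, each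
player wins the car with probability 3/7 by sticking (car behind own door) and
4/7 by switching (car behind the unopened door other than one's own). -/
theorem baumann_two_player :
    ((∑ ω ∈ univ.filter (fun ω : Fin 3 × Fin 3 × Fin 3 × Fin 3 => ω.1 = ω.2.1),
        baumannWeight ω) /
      (∑ ω ∈ (univ : Finset (Fin 3 × Fin 3 × Fin 3 × Fin 3)), baumannWeight ω) = 3/7) ∧
    ((∑ ω ∈ univ.filter (fun ω : Fin 3 × Fin 3 × Fin 3 × Fin 3 =>
          ω.1 ≠ ω.2.1 ∧ ω.1 ≠ ω.2.2.2), baumannWeight ω) /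
      (∑ ω ∈ (univ : Finset (Fin 3 × Fin 3 × Fin 3 × Fin 3)), baumannWeight ω) = 4/7) ∧
    ((∑ ω ∈ univ.filter (fun ω : Fin 3 × Fin 3 × Fin 3 × Fin 3 => ω.1 = ω.2.2.1),
        baumannWeight ω) /
      (∑ ω ∈ (univ : Finset (Fin 3 × Fin 3 × Fin 3 × Fin 3)), baumannWeight ω) = 3/7) ∧
    ((∑ ω ∈ univ.filter (fun ω : Fin 3 × Fin 3 × Fin 3 × Fin 3 =>
          ω.1 ≠ ω.2.2.1 ∧ ω.1 ≠ ω.2.2.2), baumannWeight ω) /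
      (∑ ω ∈ (univ : Finset (Fin 3 × Fin 3 × Fin 3 × Fin 3)), baumannWeight ω) = 4/7) := by
  have total : ∑ ω, baumannWeight ω = 21 / 27 := by
    have h := sum_baumannWeight_filter (fun _ _ _ => True) (n := 21) (by decide)
    rwa [filter_true] at h
  rw [sum_baumannWeight_filter_and_car_ne_opened (fun ω => ω.1 ≠ ω.2.1),
    sum_baumannWeight_filter_and_car_ne_opened (fun ω => ω.1 ≠ ω.2.2.1),
    sum_baumannWeight_filter (fun c p₁ _ => c = p₁) (n := 9) (by decide),
    sum_baumannWeight_filter (fun c p₁ _ => c ≠ p₁) (n := 12) (by decide),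
    sum_baumannWeight_filter (fun c _ p₂ => c = p₂) (n := 9) (by decide),
    sum_baumannWeight_filter (fun c _ p₂ => c ≠ p₂) (n := 12) (by decide), total]
  norm_num
end
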